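/- arXiv:2505.18005 — 4 statements merged into one kernel-verified Lean document; each statement's English description precedes it below -/
import Mathlib

section
/- Suppose μ ≥ 0 and λ_X satisfy both the flow constraint ∑_{x',y'} μ(x,y,x',y') = γ ∑_{x̂,ŷ} μ(x̂,ŷ,x,y) + (1-γ)ν₀(x,y) and the causality constraint ∑_{y'} μ(x,y,x',y') = ν_X(x,x')λ_X(y|x), where ν_X is the unique occupancy measure of the chain (X, P_X, ν₀,X) with ν₀,X the X-marginal of ν₀. Then ∑_y λ_X(y|x) = 1 for all x with ν_X(x) > 0. -/
/-- flow + causality constraints imply that λ_X(·|x) is normalized at every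
state x with positive occupancy. Here ν_X is the (unique) occupancy measure of the
X-marginal chain, characterized by the two displayed equations. -/
theorem lambda_normalized
    {X Y : Type*} [Fintype X] [Fintype Y]
    (γ : ℝ) (hγ : γ ∈ Set.Ioo (0 : ℝ) 1)
    (ν₀ : X → Y → ℝ) (hν₀nn : ∀ x y, 0 ≤ ν₀ x y) (hν₀sum : ∑ x, ∑ y, ν₀ x y = 1)
    (PX : X → X → ℝ) (hPnn : ∀ x x', 0 ≤ PX x x') (hPsum : ∀ x, ∑ x', PX x x' = 1)
    (νX : X → X → ℝ)
    (hνXflow : ∀ x, ∑ x', νX x x' =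
      γ * (∑ x'', νX x'' x) + (1 - γ) * ∑ y, ν₀ x y)
    (hνXker : ∀ x x', νX x x' = PX x x' * ∑ x'', νX x x'')
    (μ : X → Y → X → Y → ℝ) (hμnn : ∀ x y x' y', 0 ≤ μ x y x' y')
    (lamX : X → Y → ℝ) (hlamnn : ∀ x y, 0 ≤ lamX x y)
    (hflow : ∀ x y, ∑ x', ∑ y', μ x y x' y' =
      γ * (∑ xh, ∑ yh, μ xh yh x y) + (1 - γ) * ν₀ x y)
    (hcausal : ∀ x x' y, ∑ y', μ x y x' y' = νX x x' * lamX x y) :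
    ∀ x, 0 < ∑ x', νX x x' → ∑ y, lamX x y = 1 := by
  classical
  set m : X → ℝ := fun x => ∑ x', νX x x' with hm
  set L : X → ℝ := fun x => ∑ y, lamX x y with hL
  set g : X → ℝ := fun x => m x * (L x - 1) with hg
  -- key identity from summing flow over y and using causality
  have hstar : ∀ x, m x * L x = γ * (∑ xh, νX xh x * L xh) + (1 - γ) * ∑ y, ν₀ x y := by
    intro x
    have h1 : ∑ y, ∑ x', ∑ y', μ x y x' y' = m x * L x := by
      calc ∑ y, ∑ x', ∑ y', μ x y x' y'
          = ∑ y, ∑ x', νX x x' * lamX x y := by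
            exact Finset.sum_congr rfl fun y _ =>
              Finset.sum_congr rfl fun x' _ => hcausal x x' y
        _ = ∑ y, m x * lamX x y := by
            refine Finset.sum_congr rfl fun y _ => ?_
            rw [← Finset.sum_mul]
        _ = m x * L x := by rw [← Finset.mul_sum]
    have h2 : ∑ y, ∑ xh, ∑ yh, μ xh yh x y = ∑ xh, νX xh x * L xh := by
      rw [Finset.sum_comm]
      refine Finset.sum_congr rfl fun xh _ => ?_
      rw [Finset.sum_comm]
      calc ∑ yh, ∑ y, μ xh yh x y
          = ∑ yh, νX xh x * lamX xh yh := by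
            exact Finset.sum_congr rfl fun yh _ => hcausal xh x yh
        _ = νX xh x * L xh := by rw [← Finset.mul_sum]
    have h3 : ∑ y, ∑ x', ∑ y', μ x y x' y'
        = γ * (∑ y, ∑ xh, ∑ yh, μ xh yh x y) + (1 - γ) * ∑ y, ν₀ x y := by
      rw [Finset.mul_sum, Finset.mul_sum, ← Finset.sum_add_distrib]
      exact Finset.sum_congr rfl fun y _ => hflow x y
    rw [h1, h2] at h3
    linarith [h3]
  -- g satisfies g = γ · Pᵀ g
  have hgeq : ∀ x, g x = γ * ∑ xh, PX xh x * g xh := by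
    intro x
    have h4 := hstar x
    have h5 := hνXflow x
    have h6 : ∑ xh, νX xh x * L xh - ∑ xh, νX xh x = ∑ xh, PX xh x * g xh := by
      rw [← Finset.sum_sub_distrib]
      refine Finset.sum_congr rfl fun xh _ => ?_
      have := hνXker xh x
      simp only [hg, hm]
      rw [this]
      ring
    simp only [hg]
    have : m x * (L x - 1) = m x * L x - m x := by ring
    rw [this, ← h6]
    simp only [hm] at h5 ⊢
    rw [h4]
    rw [h5]
    ring
  -- sum of |g| contracts
  have habs : ∑ x, |g x| ≤ γ * ∑ x, |g x| := by
    have step : ∀ x, |g x| ≤ γ * ∑ xh, PX xh x * |g xh| := by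
      intro x
      rw [hgeq x, abs_mul, abs_of_nonneg (le_of_lt hγ.1)]
      refine mul_le_mul_of_nonneg_left ?_ (le_of_lt hγ.1)
      refine (Finset.abs_sum_le_sum_abs _ _).trans ?_
      refine Finset.sum_le_sum fun xh _ => ?_
      rw [abs_mul, abs_of_nonneg (hPnn xh x)]
    calc ∑ x, |g x| ≤ ∑ x, γ * ∑ xh, PX xh x * |g xh| :=
          Finset.sum_le_sum fun x _ => step x
      _ = γ * ∑ xh, |g xh| := by
          rw [← Finset.mul_sum, Finset.sum_comm]
          congr 1
          refine Finset.sum_congr rfl fun xh _ => ?_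
          rw [← Finset.sum_mul, hPsum xh, one_mul]
  have hS0 : ∑ x, |g x| = 0 := by
    have hSnn : 0 ≤ ∑ x, |g x| := Finset.sum_nonneg fun x _ => abs_nonneg _
    nlinarith [hγ.2]
  have hg0 : ∀ x, g x = 0 := by
    intro x
    have := (Finset.sum_eq_zero_iff_of_nonneg (fun x _ => abs_nonneg (g x))).mp hS0 x
      (Finset.mem_univ x)
    exact abs_eq_zero.mp this
  intro x hx
  have hgx := hg0 x
  simp only [hg] at hgx
  have hmx : m x ≠ 0 := ne_of_gt hx
  have : L x - 1 = 0 := by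
    rcases mul_eq_zero.mp hgx with h | h
    · exact absurd h hmx
    · exact h
  simp only [hL] at this
  linarith
end

section
/- Let (Z_k) be a martingale with respect to a filtration (F_k), with predictable processes (A_k), (B_k) and constants (c_k) such that A_k ≤ Z_k − Z_{k−1} ≤ B_k and B_k − A_k ≤ c_k almost surely. Then for all ε > 0, P[Z_t − Z₀ ≥ ε] ≤ exp(−2ε²/∑_{i=1}^t c_i²). -/
/-!
Write `D = Z k - Z (k - 1)` and `m = ℱ (k - 1)`. Since `A ≤ D ≤ B` with `A`, `B` being
`m`-measurable and `μ[D | m] = 0`, we get `A ≤ 0 ≤ B`. Convexity bounds `exp (t * D)` by its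
chord over `[A, B]`, i.e. by `κ + β * D` with `m`-measurable `κ`, `β`. The constant term `κ`
is the mgf of the mean-zero law on `{A, B}`, which Hoeffding's lemma bounds by
`exp ((B - A) ^ 2 * t ^ 2 / 8)`, and the term `β * D` vanishes after integration against any
`m`-measurable weight. Taking the weight `exp (t * (Z (k - 1) - Z 0))` shows by induction that
`Z t - Z 0` is sub-Gaussian with variance proxy `∑ c i ^ 2 / 4`, and the Chernoff bound finishes.
-/

open MeasureTheory ProbabilityTheory Real
open scoped NNReal

theorem hoeffding_lemma_two_point {a b : ℝ} (ha : a ≤ 0) (hb : 0 ≤ b) (hab : a < b) (t : ℝ) :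
    (b * exp (t * a) - a * exp (t * b)) / (b - a) ≤ exp ((b - a) ^ 2 * t ^ 2 / 8) := by
  have hba : 0 < b - a := sub_pos.2 hab
  have hwa : 0 ≤ b / (b - a) := div_nonneg hb hba.le
  have hwb : 0 ≤ -a / (b - a) := div_nonneg (neg_nonneg.2 ha) hba.le
  let ν : Measure ℝ := ENNReal.ofReal (b / (b - a)) • Measure.dirac a +
    ENNReal.ofReal (-a / (b - a)) • Measure.dirac b
  have hν (f : ℝ → ℝ) : ∫ x, f x ∂ν = b / (b - a) * f a + -a / (b - a) * f b := by
    have hint (x : ℝ) (w : ℝ) : Integrable f (ENNReal.ofReal w • Measure.dirac x) :=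
      (integrable_dirac (by simp)).smul_measure ENNReal.ofReal_ne_top
    rw [integral_add_measure (hint _ _) (hint _ _), integral_smul_measure, integral_smul_measure,
      integral_dirac, integral_dirac, ENNReal.toReal_ofReal hwa, ENNReal.toReal_ofReal hwb,
      smul_eq_mul, smul_eq_mul]
  have : IsProbabilityMeasure ν := by
    constructor
    simp only [ν, Measure.coe_add, Measure.coe_smul, Pi.add_apply, Pi.smul_apply, measure_univ,
      smul_eq_mul, mul_one]
    rw [← ENNReal.ofReal_add hwa hwb, ← add_div, ← sub_eq_add_neg, div_self hba.ne',
      ENNReal.ofReal_one]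
  have hmem : ∀ᵐ x ∂ν, x ∈ Set.Icc a b :=
    ae_add_measure_iff.2
      ⟨Measure.ae_smul_measure ((ae_dirac_iff measurableSet_Icc).2 (Set.left_mem_Icc.2 hab.le)) _,
       Measure.ae_smul_measure ((ae_dirac_iff measurableSet_Icc).2 (Set.right_mem_Icc.2 hab.le)) _⟩
  have hmean : ν[id] = 0 := by
    rw [hν, id, id]; field_simp; ring
  have := (hasSubgaussianMGF_of_mem_Icc_of_integral_eq_zero aemeasurable_id hmem hmean).mgf_le t
  rw [mgf, hν] at this
  convert this using 2
  · simp only [id]; ring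
  · push_cast
    rw [Real.norm_eq_abs, div_pow, sq_abs]
    ring

theorem exp_mul_le_exp_add_slope_mul {a b x : ℝ} (ha : a ≤ 0) (hb : 0 ≤ b) (hx : x ∈ Set.Icc a b)
    (t : ℝ) :
    exp (t * x) ≤ exp ((b - a) ^ 2 * t ^ 2 / 8) + slope (fun y ↦ exp (t * y)) a b * x := by
  obtain ⟨hax, hxb⟩ := hx
  rcases (hax.trans hxb).eq_or_lt with rfl | hab
  · obtain rfl : x = 0 := by linarith
    simp
  have hba : 0 < b - a := sub_pos.2 hab
  have hchord :
      exp (t * x) ≤ (b - x) / (b - a) * exp (t * a) + (x - a) / (b - a) * exp (t * b) := by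
    have := convexOn_exp.2 (Set.mem_univ (t * a)) (Set.mem_univ (t * b))
      (div_nonneg (sub_nonneg.2 hxb) hba.le) (div_nonneg (sub_nonneg.2 hax) hba.le)
      (by field_simp; ring)
    rwa [smul_eq_mul, smul_eq_mul, smul_eq_mul, smul_eq_mul,
      show (b - x) / (b - a) * (t * a) + (x - a) / (b - a) * (t * b) = t * x by
        field_simp; ring] at this
  calc exp (t * x)
      ≤ (b - x) / (b - a) * exp (t * a) + (x - a) / (b - a) * exp (t * b) := hchord
    _ = (b * exp (t * a) - a * exp (t * b)) / (b - a) + slope (fun y ↦ exp (t * y)) a b * x := by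
      rw [slope_def_field]; field_simp; ring
    _ ≤ _ := by gcongr; exact hoeffding_lemma_two_point ha hb hab t

theorem abs_slope_exp_mul_le {a b r : ℝ} (ha : |a| ≤ r) (hb : |b| ≤ r) (t : ℝ) :
    |slope (fun y ↦ exp (t * y)) a b| ≤ |t| * exp (|t| * r) := by
  wlog hab : a < b generalizing a b
  · rcases (not_lt.1 hab).eq_or_lt with rfl | hba
    · rw [slope_same, abs_zero]; positivity
    · rw [slope_comm]; exact this hb ha hba
  obtain ⟨ξ, hξ, hslope⟩ := exists_hasDerivAt_eq_slope (fun y ↦ exp (t * y))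
    (fun y ↦ t * exp (t * y)) hab (by fun_prop) fun y _ ↦ by
      simpa [mul_comm] using ((hasDerivAt_id y).const_mul t).exp
  have hξr : |ξ| ≤ r :=
    abs_le.2 ⟨by linarith [neg_abs_le a, hξ.1], by linarith [le_abs_self b, hξ.2]⟩
  rw [slope_def_field, ← hslope, abs_mul, abs_of_pos (exp_pos _)]
  have hexp : exp (t * ξ) ≤ exp (|t| * r) :=
    exp_le_exp.2 ((le_abs_self _).trans (by rw [abs_mul]; gcongr))
  gcongr

namespace MeasureTheory

variable {Ω : Type*} {m m0 : MeasurableSpace Ω} {μ : Measure Ω}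

theorem ae_le_condExp_of_stronglyMeasurable (hm : m ≤ m0) [SigmaFinite (μ.trim hm)]
    {f g : Ω → ℝ} (hf : StronglyMeasurable[m] f) (hfi : Integrable f μ) (hgi : Integrable g μ)
    (hfg : f ≤ᵐ[μ] g) : f ≤ᵐ[μ] μ[g | m] := by
  simpa only [condExp_of_stronglyMeasurable hm hf hfi] using condExp_mono (m := m) hfi hgi hfg

theorem condExp_ae_le_of_stronglyMeasurable (hm : m ≤ m0) [SigmaFinite (μ.trim hm)]
    {f g : Ω → ℝ} (hg : StronglyMeasurable[m] g) (hfi : Integrable f μ) (hgi : Integrable g μ)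
    (hfg : f ≤ᵐ[μ] g) : μ[f | m] ≤ᵐ[μ] g := by
  simpa only [condExp_of_stronglyMeasurable hm hg hgi] using condExp_mono (m := m) hfi hgi hfg

theorem integral_mul_eq_zero_of_condExp_ae_eq_zero (hm : m ≤ m0) [SigmaFinite (μ.trim hm)]
    {f g : Ω → ℝ} (hf : StronglyMeasurable[m] f) (hfg : Integrable (f * g) μ)
    (hg : Integrable g μ) (hg0 : μ[g | m] =ᵐ[μ] 0) : ∫ ω, f ω * g ω ∂μ = 0 := by
  have hfg0 : μ[f * g | m] =ᵐ[μ] 0 := by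
    filter_upwards [condExp_mul_of_stronglyMeasurable_left hf hfg hg, hg0] with ω h h0
    simp [h, h0]
  calc ∫ ω, f ω * g ω ∂μ = ∫ ω, μ[f * g | m] ω ∂μ := (integral_condExp hm).symm
    _ = 0 := by simp [integral_congr_ae hfg0]

theorem Martingale.condExp_sub_ae_eq_zero {ℱ : Filtration ℕ m0} [SigmaFiniteFiltration μ ℱ]
    {f : ℕ → Ω → ℝ} (hf : Martingale f ℱ μ) {i j : ℕ} (hij : i ≤ j) :
    μ[f j - f i | ℱ i] =ᵐ[μ] 0 := by
  filter_upwards [condExp_sub (m := ℱ i) (hf.integrable j) (hf.integrable i),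
    hf.condExp_ae_eq hij] with ω h hj
  rw [h, Pi.sub_apply, hj,
    condExp_of_stronglyMeasurable (ℱ.le i) (hf.stronglyAdapted i) (hf.integrable i)]
  simp

end MeasureTheory

namespace ProbabilityTheory

variable {Ω : Type*} {m m0 : MeasurableSpace Ω} {μ : Measure Ω}

variable (m) in
structure IsPredictablyBoundedIncrement (μ : Measure Ω) (D A B : Ω → ℝ) (c : ℝ) : Prop where
  integrable : Integrable D μ
  condExp_ae_eq_zero : μ[D | m] =ᵐ[μ] 0
  measurable_lower : Measurable[m] A
  measurable_upper : Measurable[m] B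
  ae_mem_Icc : ∀ᵐ ω ∂μ, D ω ∈ Set.Icc (A ω) (B ω)
  ae_sub_le : ∀ᵐ ω ∂μ, B ω - A ω ≤ c

namespace IsPredictablyBoundedIncrement

variable {D A B : Ω → ℝ} {c : ℝ}

theorem ae_lower_nonpos_and_upper_nonneg (h : IsPredictablyBoundedIncrement m μ D A B c)
    (hm : m ≤ m0) [IsFiniteMeasure μ] : ∀ᵐ ω ∂μ, A ω ≤ 0 ∧ 0 ≤ B ω := by
  have hsandwich : ∀ᵐ ω ∂μ, D ω - c ≤ A ω ∧ A ω ≤ D ω ∧ D ω ≤ B ω ∧ B ω ≤ D ω + c := by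
    filter_upwards [h.ae_mem_Icc, h.ae_sub_le] with ω ⟨hAD, hDB⟩ hc
    exact ⟨by linarith, hAD, hDB, by linarith⟩
  have hAi : Integrable A μ :=
    integrable_of_le_of_le (h.measurable_lower.mono hm le_rfl).aestronglyMeasurable
      (hsandwich.mono fun _ h ↦ h.1) (hsandwich.mono fun _ h ↦ h.2.1)
      (h.integrable.sub (integrable_const c)) h.integrable
  have hBi : Integrable B μ :=
    integrable_of_le_of_le (h.measurable_upper.mono hm le_rfl).aestronglyMeasurable
      (hsandwich.mono fun _ h ↦ h.2.2.1) (hsandwich.mono fun _ h ↦ h.2.2.2)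
      h.integrable (h.integrable.add (integrable_const c))
  have hA : A ≤ᵐ[μ] μ[D | m] :=
    ae_le_condExp_of_stronglyMeasurable hm h.measurable_lower.stronglyMeasurable hAi
      h.integrable (hsandwich.mono fun _ h ↦ h.2.1)
  have hB : μ[D | m] ≤ᵐ[μ] B :=
    condExp_ae_le_of_stronglyMeasurable hm h.measurable_upper.stronglyMeasurable h.integrable
      hBi (hsandwich.mono fun _ h ↦ h.2.2.1)
  filter_upwards [hA, hB, h.condExp_ae_eq_zero] with ω hA hB h0
  rw [h0] at hA hB
  exact ⟨hA, hB⟩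

theorem ae_abs_le (h : IsPredictablyBoundedIncrement m μ D A B c) (hm : m ≤ m0)
    [IsFiniteMeasure μ] : ∀ᵐ ω ∂μ, |D ω| ≤ c := by
  filter_upwards [h.ae_lower_nonpos_and_upper_nonneg hm, h.ae_mem_Icc, h.ae_sub_le]
    with ω ⟨hA, hB⟩ ⟨hAD, hDB⟩ hc
  exact abs_le.2 ⟨by linarith, by linarith⟩

theorem integrable_mul_exp_mul (h : IsPredictablyBoundedIncrement m μ D A B c) (hm : m ≤ m0)
    [IsFiniteMeasure μ] (t : ℝ) {W : Ω → ℝ} (hWi : Integrable W μ) :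
    Integrable (fun ω ↦ W ω * exp (t * D ω)) μ := by
  refine hWi.mul_bdd (continuous_exp.comp_aestronglyMeasurable
    (h.integrable.aestronglyMeasurable.const_mul t)) (c := exp (|t| * c)) ?_
  filter_upwards [h.ae_abs_le hm] with ω hD
  rw [Real.norm_eq_abs, abs_of_pos (exp_pos _), exp_le_exp]
  exact (le_abs_self _).trans (by rw [abs_mul]; gcongr)

theorem integral_mul_exp_mul_le (h : IsPredictablyBoundedIncrement m μ D A B c) (hm : m ≤ m0)
    [IsFiniteMeasure μ] (t : ℝ) {W : Ω → ℝ} (hW : StronglyMeasurable[m] W) (hW0 : 0 ≤ W)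
    (hWi : Integrable W μ) :
    ∫ ω, W ω * exp (t * D ω) ∂μ ≤ exp (c ^ 2 * t ^ 2 / 8) * ∫ ω, W ω ∂μ := by
  set β : Ω → ℝ := fun ω ↦ slope (fun y ↦ exp (t * y)) (A ω) (B ω)
  have hβ : StronglyMeasurable[m] β := by
    simp only [β, slope_def_field]
    exact (((measurable_exp.comp (h.measurable_upper.const_mul t)).sub
      (measurable_exp.comp (h.measurable_lower.const_mul t))).div
        (h.measurable_upper.sub h.measurable_lower)).stronglyMeasurable
  have hDm : AEStronglyMeasurable D μ := h.integrable.aestronglyMeasurable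
  have hbounds : ∀ᵐ ω ∂μ, |A ω| ≤ c ∧ |B ω| ≤ c ∧ (B ω - A ω) ^ 2 ≤ c ^ 2 := by
    filter_upwards [h.ae_lower_nonpos_and_upper_nonneg hm, h.ae_sub_le] with ω ⟨hA, hB⟩ hc
    refine ⟨abs_le.2 ⟨?_, ?_⟩, abs_le.2 ⟨?_, ?_⟩, pow_le_pow_left₀ (by linarith) hc 2⟩
    all_goals linarith
  have hβD : ∀ᵐ ω ∂μ, ‖β ω * D ω‖ ≤ |t| * exp (|t| * c) * c := by
    filter_upwards [hbounds, h.ae_abs_le hm] with ω ⟨hA, hB, _⟩ hD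
    rw [norm_mul, Real.norm_eq_abs, Real.norm_eq_abs]
    exact mul_le_mul (abs_slope_exp_mul_le hA hB t) hD (abs_nonneg _) (by positivity)
  have hpt : ∀ᵐ ω ∂μ,
      W ω * exp (t * D ω) ≤ exp (c ^ 2 * t ^ 2 / 8) * W ω + W ω * β ω * D ω := by
    filter_upwards [h.ae_lower_nonpos_and_upper_nonneg hm, h.ae_mem_Icc, hbounds]
      with ω ⟨hA, hB⟩ hD ⟨_, _, hc⟩
    calc W ω * exp (t * D ω)
        ≤ W ω * (exp ((B ω - A ω) ^ 2 * t ^ 2 / 8) + β ω * D ω) :=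
          mul_le_mul_of_nonneg_left (exp_mul_le_exp_add_slope_mul hA hB hD t) (hW0 ω)
      _ ≤ W ω * (exp (c ^ 2 * t ^ 2 / 8) + β ω * D ω) := by
          gcongr
          exact hW0 ω
      _ = _ := by ring
  have hint : Integrable (fun ω ↦ W ω * β ω * D ω) μ := by
    simpa only [Pi.mul_apply, mul_assoc] using
      hWi.mul_bdd ((hβ.mono hm).aestronglyMeasurable.mul hDm) hβD
  have horth : ∫ ω, W ω * β ω * D ω ∂μ = 0 :=
    integral_mul_eq_zero_of_condExp_ae_eq_zero hm (hW.mul hβ) hint h.integrable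
      h.condExp_ae_eq_zero
  calc ∫ ω, W ω * exp (t * D ω) ∂μ
      ≤ ∫ ω, (exp (c ^ 2 * t ^ 2 / 8) * W ω + W ω * β ω * D ω) ∂μ :=
        integral_mono_ae (h.integrable_mul_exp_mul hm t hWi) ((hWi.const_mul _).add hint) hpt
    _ = exp (c ^ 2 * t ^ 2 / 8) * ∫ ω, W ω ∂μ := by
        rw [integral_add (hWi.const_mul _) hint, integral_const_mul, horth, add_zero]

end IsPredictablyBoundedIncrement

theorem HasSubgaussianMGF.add_of_isPredictablyBoundedIncrement [IsFiniteMeasure μ] (hm : m ≤ m0)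
    {X D A B : Ω → ℝ} {cX : ℝ≥0} {c : ℝ} (hX : HasSubgaussianMGF X cX μ)
    (hXm : StronglyMeasurable[m] X) (hD : IsPredictablyBoundedIncrement m μ D A B c) :
    HasSubgaussianMGF (X + D) (cX + (‖c‖₊ / 2) ^ 2) μ where
  integrable_exp_mul t := by
    simpa only [Pi.add_apply, mul_add, exp_add] using
      hD.integrable_mul_exp_mul hm t (hX.integrable_exp_mul t)
  mgf_le t := by
    have hW : StronglyMeasurable[m] fun ω ↦ exp (t * X ω) :=
      continuous_exp.comp_stronglyMeasurable (hXm.const_mul t)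
    calc mgf (X + D) μ t = ∫ ω, exp (t * X ω) * exp (t * D ω) ∂μ := by
          simp only [mgf, Pi.add_apply, mul_add, exp_add]
      _ ≤ exp (c ^ 2 * t ^ 2 / 8) * mgf X μ t :=
          hD.integral_mul_exp_mul_le hm t hW (fun _ ↦ (exp_pos _).le) (hX.integrable_exp_mul t)
      _ ≤ exp (c ^ 2 * t ^ 2 / 8) * exp (cX * t ^ 2 / 2) := by gcongr; exact hX.mgf_le t
      _ = exp (((cX + (‖c‖₊ / 2) ^ 2 : ℝ≥0) : ℝ) * t ^ 2 / 2) := by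
          rw [← exp_add]
          push_cast
          rw [Real.norm_eq_abs, div_pow, sq_abs]
          ring_nf

theorem hasSubgaussianMGF_sub_of_isPredictablyBoundedIncrement [IsProbabilityMeasure μ]
    {ℱ : Filtration ℕ m0} {Z A B : ℕ → Ω → ℝ} {c : ℕ → ℝ} (hZ : StronglyAdapted ℱ Z)
    (hinc : ∀ k, 1 ≤ k →
      IsPredictablyBoundedIncrement (ℱ (k - 1)) μ (Z k - Z (k - 1)) (A k) (B k) (c k))
    (n : ℕ) : HasSubgaussianMGF (Z n - Z 0) (∑ i ∈ Finset.Icc 1 n, (‖c i‖₊ / 2) ^ 2) μ := by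
  induction n with
  | zero => simp
  | succ n ih =>
    have hstep := ih.add_of_isPredictablyBoundedIncrement (ℱ.le n)
      ((hZ n).sub ((hZ 0).mono (ℱ.mono n.zero_le)))
      (by simpa using hinc (n + 1) (Nat.le_add_left 1 n))
    rw [Finset.sum_Icc_succ_top (Nat.le_add_left 1 n)]
    convert hstep using 1
    abel

end ProbabilityTheory

/-- Hoeffding–Azuma inequality with predictable bounds:
if (Z_k) is a martingale whose increments satisfy A_k ≤ Z_k − Z_{k−1} ≤ B_k a.s. with
A_k, B_k predictable and B_k − A_k ≤ c_k, then
ℙ[Z_t − Z₀ ≥ ε] ≤ exp(−2ε²/∑_{i=1}^t c_i²). -/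
theorem azuma_hoeffding_predictable
    {Ω : Type*} {m0 : MeasurableSpace Ω} (μ : Measure Ω) [IsProbabilityMeasure μ]
    (ℱ : Filtration ℕ m0) (Z A B : ℕ → Ω → ℝ) (c : ℕ → ℝ)
    (hmart : Martingale Z ℱ μ)
    (hpred : ∀ k : ℕ, 1 ≤ k →
      Measurable[ℱ (k - 1)] (A k) ∧ Measurable[ℱ (k - 1)] (B k))
    (hbdd : ∀ k : ℕ, 1 ≤ k → ∀ᵐ ω ∂μ,
      A k ω ≤ Z k ω - Z (k - 1) ω ∧ Z k ω - Z (k - 1) ω ≤ B k ω ∧ B k ω - A k ω ≤ c k)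
    (t : ℕ) (ε : ℝ) (hε : 0 < ε) :
    (μ {ω | ε ≤ Z t ω - Z 0 ω}).toReal ≤
      Real.exp (-2 * ε ^ 2 / ∑ i ∈ Finset.Icc 1 t, c i ^ 2) := by
  have hinc (k : ℕ) (hk : 1 ≤ k) :
      IsPredictablyBoundedIncrement (ℱ (k - 1)) μ (Z k - Z (k - 1)) (A k) (B k) (c k) :=
    { integrable := (hmart.integrable k).sub (hmart.integrable (k - 1))
      condExp_ae_eq_zero := hmart.condExp_sub_ae_eq_zero (Nat.sub_le k 1)
      measurable_lower := (hpred k hk).1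
      measurable_upper := (hpred k hk).2
      ae_mem_Icc := by filter_upwards [hbdd k hk] with ω hω using ⟨hω.1, hω.2.1⟩
      ae_sub_le := by filter_upwards [hbdd k hk] with ω hω using hω.2.2 }
  have hsum : ((∑ i ∈ Finset.Icc 1 t, (‖c i‖₊ / 2) ^ 2 : ℝ≥0) : ℝ) =
      (∑ i ∈ Finset.Icc 1 t, c i ^ 2) / 4 := by
    push_cast
    simp only [Real.norm_eq_abs, div_pow, sq_abs, Finset.sum_div]
    norm_num
  calc (μ {ω | ε ≤ Z t ω - Z 0 ω}).toReal
      ≤ Real.exp (-ε ^ 2 / (2 * ((∑ i ∈ Finset.Icc 1 t, c i ^ 2) / 4))) := by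
        rw [← hsum]
        exact (hasSubgaussianMGF_sub_of_isPredictablyBoundedIncrement
          hmart.stronglyAdapted hinc t).measure_ge_le hε.le
    _ = Real.exp (-2 * ε ^ 2 / ∑ i ∈ Finset.Icc 1 t, c i ^ 2) := by ring_nf
end

section
/- Bound on rounding error via constraint violations: if μ is a probability distribution on X×Y×X×Y and r(μ) is a valid occupancy coupling (satisfying the flow constraint with factor γ) obtained by the transition-coupling rounding procedure, and ‖ν_μ ∘ (r(π_μ) − π_μ)‖₁ ≤ Δ where ν_μ(x,y) = ∑_{x',y'} μ(x,y,x',y') and π_μ is the normalized conditional of μ, then ‖r(μ) − μ‖₁ ≤ (∂F(μ) + Δ)/(1−γ), where ∂F(μ) = ∑_{x,y} |∑_{x',y'} μ(x,y,x',y') − γ∑_{x̂,ŷ} μ(x̂,ŷ,x,y) − (1−γ)ν₀(x,y)| is the total flow-constraint violation. -/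
/-- rounding error bound via constraint violations. With S = X×Y,
μ = ν_μ ∘ π (ν_μ the state marginal of μ), r = ν_r ∘ rπ a valid occupancy coupling
(rπ a stochastic kernel, ν_r satisfying the flow constraint), and
‖ν_μ ∘ (rπ − π)‖₁ ≤ Δ, one has ‖r − μ‖₁ ≤ (∂F(μ) + Δ)/(1 − γ), where ∂F(μ) is the
total flow-constraint violation of μ. -/
theorem rounding_error_bound
    {X Y : Type*} [Fintype X] [Fintype Y]
    (γ : ℝ) (hγ : γ ∈ Set.Ioo (0 : ℝ) 1)
    (ν₀ : X × Y → ℝ) (hν₀nn : ∀ s, 0 ≤ ν₀ s) (hν₀sum : ∑ s, ν₀ s = 1)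
    (μ r : X × Y → X × Y → ℝ) (hμnn : ∀ s s', 0 ≤ μ s s') (hμsum : ∑ s, ∑ s', μ s s' = 1)
    (π rπ : X × Y → X × Y → ℝ)
    (hπ : ∀ s s', μ s s' = (∑ s'', μ s s'') * π s s')
    (νr : X × Y → ℝ)
    (hrπnn : ∀ s s', 0 ≤ rπ s s') (hrπsum : ∀ s, ∑ s', rπ s s' = 1)
    (hr : ∀ s s', r s s' = νr s * rπ s s')
    (hrflow : ∀ s, νr s = γ * (∑ sh, r sh s) + (1 - γ) * ν₀ s)
    (Δ : ℝ)
    (hΔ : ∑ s, ∑ s', |(∑ s'', μ s s'') * (rπ s s' - π s s')| ≤ Δ) :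
    ∑ s, ∑ s', |r s s' - μ s s'| ≤
      ((∑ s, |(∑ s', μ s s') - γ * (∑ sh, μ sh s) - (1 - γ) * ν₀ s|) + Δ) / (1 - γ) := by
  obtain ⟨hγ0, hγ1⟩ := hγ
  set E : ℝ := ∑ s, ∑ s', |r s s' - μ s s'| with hE
  set F : ℝ := ∑ s, |(∑ s', μ s s') - γ * (∑ sh, μ sh s) - (1 - γ) * ν₀ s| with hF
  -- pointwise decomposition
  have h1 : ∀ s s', |r s s' - μ s s'| ≤
      |νr s - (∑ s'', μ s s'')| * rπ s s' +
      |(∑ s'', μ s s'') * (rπ s s' - π s s')| := by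
    intro s s'
    have heq : r s s' - μ s s' =
        (νr s - (∑ s'', μ s s'')) * rπ s s' +
        (∑ s'', μ s s'') * (rπ s s' - π s s') := by
      rw [hr, hπ]; ring
    rw [heq]
    calc |(νr s - (∑ s'', μ s s'')) * rπ s s' +
          (∑ s'', μ s s'') * (rπ s s' - π s s')|
        ≤ |(νr s - (∑ s'', μ s s'')) * rπ s s'| +
          |(∑ s'', μ s s'') * (rπ s s' - π s s')| := abs_add_le _ _
      _ = |νr s - (∑ s'', μ s s'')| * rπ s s' +
          |(∑ s'', μ s s'') * (rπ s s' - π s s')| := by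
          rw [abs_mul, abs_of_nonneg (hrπnn s s')]
  -- E ≤ ∑ |νr - νμ| + Δ
  have h2 : E ≤ (∑ s, |νr s - (∑ s'', μ s s'')|) + Δ := by
    have hrow : ∀ s : X × Y, ∑ s', (|νr s - (∑ s'', μ s s'')| * rπ s s' +
        |(∑ s'', μ s s'') * (rπ s s' - π s s')|) =
        |νr s - (∑ s'', μ s s'')| + ∑ s', |(∑ s'', μ s s'') * (rπ s s' - π s s')| := by
      intro s
      rw [Finset.sum_add_distrib, ← Finset.mul_sum, hrπsum, mul_one]
    calc E ≤ ∑ s, ∑ s', (|νr s - (∑ s'', μ s s'')| * rπ s s' +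
            |(∑ s'', μ s s'') * (rπ s s' - π s s')|) := by
          apply Finset.sum_le_sum; intro s _
          exact Finset.sum_le_sum fun s' _ => h1 s s'
      _ = (∑ s, |νr s - (∑ s'', μ s s'')|) +
          ∑ s, ∑ s', |(∑ s'', μ s s'') * (rπ s s' - π s s')| := by
          simp_rw [hrow]; rw [Finset.sum_add_distrib]
      _ ≤ (∑ s, |νr s - (∑ s'', μ s s'')|) + Δ := by linarith
  -- ∑ |νr - νμ| ≤ γ E + F
  have h3 : (∑ s, |νr s - (∑ s'', μ s s'')|) ≤ γ * E + F := by
    have hpt : ∀ s : X × Y, |νr s - (∑ s'', μ s s'')| ≤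
        γ * (∑ sh, |r sh s - μ sh s|) +
        |(∑ s', μ s s') - γ * (∑ sh, μ sh s) - (1 - γ) * ν₀ s| := by
      intro s
      have heq : νr s - (∑ s'', μ s s'') =
          γ * (∑ sh, (r sh s - μ sh s)) -
          ((∑ s', μ s s') - γ * (∑ sh, μ sh s) - (1 - γ) * ν₀ s) := by
        rw [hrflow, Finset.sum_sub_distrib]; ring
      rw [heq]
      calc |γ * (∑ sh, (r sh s - μ sh s)) -
            ((∑ s', μ s s') - γ * (∑ sh, μ sh s) - (1 - γ) * ν₀ s)|
          ≤ |γ * (∑ sh, (r sh s - μ sh s))| +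
            |(∑ s', μ s s') - γ * (∑ sh, μ sh s) - (1 - γ) * ν₀ s| := abs_sub _ _
        _ ≤ γ * (∑ sh, |r sh s - μ sh s|) +
            |(∑ s', μ s s') - γ * (∑ sh, μ sh s) - (1 - γ) * ν₀ s| := by
            gcongr
            rw [abs_mul, abs_of_pos hγ0]
            gcongr
            exact Finset.abs_sum_le_sum_abs _ _
    calc (∑ s, |νr s - (∑ s'', μ s s'')|)
        ≤ ∑ s, (γ * (∑ sh, |r sh s - μ sh s|) +
            |(∑ s', μ s s') - γ * (∑ sh, μ sh s) - (1 - γ) * ν₀ s|) :=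
          Finset.sum_le_sum fun s _ => hpt s
      _ = γ * (∑ s, ∑ sh, |r sh s - μ sh s|) + F := by
          rw [Finset.sum_add_distrib, Finset.mul_sum]
      _ = γ * E + F := by rw [hE, Finset.sum_comm]
  have hEF : E ≤ γ * E + F + Δ := by linarith
  rw [le_div_iff₀ (by linarith : (0:ℝ) < 1 - γ)]
  nlinarith
end

section
/- The per-state rounding error of the symmetric coupling rounding is bounded by marginal mismatches: for a transition coupling π(·,·|x,y) on X×Y with target marginals P_X(·|x), P_Y(·|y), multiplying the ℓ₁ rounding error bound by ν(x,y) and using triangle-inequality manipulations yields ∑_{x'} |P_X(x'|x)ν(x,y) − ∑_{y'} μ(x,y,x',y')| ≤ 2 ∂C_X(μ,λ_X), where μ(x,y,x',y') = ν(x,y)π(x',y'|x,y), provided ∑_{x',y'}μ(x,y,x',y') = ν(x,y) and ν_X(x,x') = P_X(x'|x)ν_X(x) where ν_X(x) = ∑_{x'}ν_X(x,x'), and ∂C_X(μ,λ_X) = ∑_{x,x',y} |∑_{y'} μ(x,y,x',y') − ν_X(x,x')λ_X(y|x)| with λ_X(·|x) ∈ Δ_Y. -/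
/-- per-state bound of the marginal mismatch by the causality-constraint
violation: for every fixed (x,y),
∑_{x'} |P_X(x'|x) ν(x,y) − ∑_{y'} μ(x,y,x',y')| ≤ 2 ∂C_X(μ, λ_X),
where ν(x,y) = ∑_{x',y'} μ(x,y,x',y'), ν_X(x,x') = P_X(x'|x) ν_X(x), and
∂C_X(μ,λ_X) = ∑_{x,x',y} |∑_{y'} μ(x,y,x',y') − ν_X(x,x') λ_X(y|x)|. -/
theorem per_state_rounding_error
    {X Y : Type*} [Fintype X] [Fintype Y]
    (μ : X → Y → X → Y → ℝ) (hμnn : ∀ x y x' y', 0 ≤ μ x y x' y')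
    (νX : X → X → ℝ) (hνXnn : ∀ x x', 0 ≤ νX x x') (hνXsum : ∑ x, ∑ x', νX x x' = 1)
    (PX : X → X → ℝ) (hPnn : ∀ x x', 0 ≤ PX x x') (hPsum : ∀ x, ∑ x', PX x x' = 1)
    (hker : ∀ x x', νX x x' = PX x x' * ∑ x'', νX x x'')
    (lamX : X → Y → ℝ) (hlamnn : ∀ x y, 0 ≤ lamX x y) (hlamsum : ∀ x, ∑ y, lamX x y = 1) :
    ∀ x y, ∑ x', |PX x x' * (∑ x'', ∑ y', μ x y x'' y') - ∑ y', μ x y x' y'| ≤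
      2 * ∑ a, ∑ a', ∑ b, |(∑ y', μ a b a' y') - νX a a' * lamX a b| := by
  intro x y
  set ν : ℝ := ∑ x'', ∑ y', μ x y x'' y' with hν
  set νx : ℝ := ∑ x'', νX x x'' with hνx
  set S : ℝ := ∑ x', |(∑ y', μ x y x' y') - νX x x' * lamX x y| with hSdef
  have key : ∀ x', |PX x x' * ν - ∑ y', μ x y x' y'| ≤
      |(∑ y', μ x y x' y') - νX x x' * lamX x y| + PX x x' * |νx * lamX x y - ν| := by
    intro x'
    have h1 : PX x x' * ν - ∑ y', μ x y x' y' =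
        ((νX x x' * lamX x y) - ∑ y', μ x y x' y') + PX x x' * (ν - νx * lamX x y) := by
      rw [hker]; ring
    calc |PX x x' * ν - ∑ y', μ x y x' y'|
        ≤ |(νX x x' * lamX x y) - ∑ y', μ x y x' y'| + |PX x x' * (ν - νx * lamX x y)| := by
          rw [h1]; exact abs_add_le _ _
      _ = |(∑ y', μ x y x' y') - νX x x' * lamX x y| + PX x x' * |νx * lamX x y - ν| := by
          rw [abs_sub_comm, abs_mul, abs_of_nonneg (hPnn x x'), abs_sub_comm ν]
  have step : ∑ x', |PX x x' * ν - ∑ y', μ x y x' y'| ≤ S + |νx * lamX x y - ν| := by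
    calc ∑ x', |PX x x' * ν - ∑ y', μ x y x' y'|
        ≤ ∑ x', (|(∑ y', μ x y x' y') - νX x x' * lamX x y| + PX x x' * |νx * lamX x y - ν|) :=
          Finset.sum_le_sum fun x' _ => key x'
      _ = S + |νx * lamX x y - ν| := by
          rw [Finset.sum_add_distrib, ← Finset.sum_mul, hPsum x, one_mul]
  have h2 : |νx * lamX x y - ν| ≤ S := by
    have he : νx * lamX x y - ν = ∑ x', (νX x x' * lamX x y - ∑ y', μ x y x' y') := by
      rw [hν, hνx, Finset.sum_sub_distrib, Finset.sum_mul]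
    rw [he]
    calc |∑ x', (νX x x' * lamX x y - ∑ y', μ x y x' y')|
        ≤ ∑ x', |νX x x' * lamX x y - ∑ y', μ x y x' y'| := Finset.abs_sum_le_sum_abs _ _
      _ = S := by simp [hSdef, abs_sub_comm]
  have hS : S ≤ ∑ a, ∑ a', ∑ b, |(∑ y', μ a b a' y') - νX a a' * lamX a b| := by
    have h3 : S ≤ ∑ a', ∑ b, |(∑ y', μ x b a' y') - νX x a' * lamX x b| :=
      Finset.sum_le_sum fun a' _ =>
        Finset.single_le_sum (f := fun b => |(∑ y', μ x b a' y') - νX x a' * lamX x b|)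
          (fun b _ => abs_nonneg _) (Finset.mem_univ y)
    refine h3.trans ?_
    exact Finset.single_le_sum (f := fun a => ∑ a', ∑ b, |(∑ y', μ a b a' y') - νX a a' * lamX a b|)
      (fun a _ => Finset.sum_nonneg fun a' _ => Finset.sum_nonneg fun b _ => abs_nonneg _)
      (Finset.mem_univ x)
  calc ∑ x', |PX x x' * ν - ∑ y', μ x y x' y'| ≤ S + |νx * lamX x y - ν| := step
    _ ≤ S + S := by linarith
    _ = 2 * S := by ring
    _ ≤ _ := by linarith [hS]
end
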